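/- Let 1 ≤ j < i ≤ n and c ≥ 0. Then, in H_n, the element T_j T_{j+1} ⋯ T_{i−1} · x_i^c − γ^c · m_{ij}(c) lies in 𝔪_i H_n. In particular, T_j T_{j+1} ⋯ T_{i−1} · x_i^c ∈ 𝔪_i H_n whenever c > i − j. -/

import Mathlib

open Classical

/-- The element `m_{ij}(c)` of the (degenerate) affine Hecke algebra:
`∑_{j ≤ d_1 < ⋯ < d_{i-j-c} ≤ i-1} T_{d_1} ⋯ T_{d_{i-j-c}}` if `c < i - j`, `1` if
`c = i - j`, and `0` if `c > i - j`. -/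
noncomputable def mm {A : Type*} [Ring A] (T : ℕ → A) (i j c : ℕ) : A :=
  if c < i - j then
    ∑ s ∈ (Finset.Icc j (i - 1)).powersetCard (i - j - c),
      ((s.sort (· ≤ ·)).map T).prod
  else if c = i - j then 1 else 0

lemma mm_top {A : Type*} [Ring A] (T : ℕ → A) {i j c : ℕ} (h : c = i - j) :
    mm T i j c = 1 := by
  rw [mm, if_neg (by omega), if_pos h]

lemma mm_high {A : Type*} [Ring A] (T : ℕ → A) {i j c : ℕ} (h : i - j < c) :
    mm T i j c = 0 := by
  rw [mm, if_neg (by omega), if_neg (by omega)]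

lemma mm_eq_sum {A : Type*} [Ring A] (T : ℕ → A) {i j c : ℕ} (hc : c ≤ i - j) :
    mm T i j c = ∑ s ∈ (Finset.Icc j (i - 1)).powersetCard (i - j - c),
      ((s.sort (· ≤ ·)).map T).prod := by
  rcases lt_or_eq_of_le hc with h | h
  · rw [mm, if_pos h]
  · have : i - j - c = 0 := by omega
    rw [this, Finset.powersetCard_zero, mm_top T h, Finset.sum_singleton,
      Finset.sort_empty]
    simp

lemma sort_Icc : ∀ (len a : ℕ), (Finset.Icc a (a + len)).sort (· ≤ ·) = List.range' a (len + 1) := by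
  intro len
  induction len with
  | zero => intro a; simp
  | succ m ih =>
    intro a
    have h1 : Finset.Icc a (a + (m + 1)) = insert a (Finset.Icc (a + 1) ((a + 1) + m)) := by
      ext t; simp [Finset.mem_Icc, Finset.mem_insert]; omega
    have h2 : a ∉ Finset.Icc (a + 1) ((a + 1) + m) := by simp
    rw [h1, Finset.sort_insert _ (fun b hb => by simp [Finset.mem_Icc] at hb; omega) h2, ih]
    simp [List.range'_succ]

lemma mm_chain {A : Type*} [Ring A] (T : ℕ → A) {i j : ℕ} (hji : j ≤ i) :
    mm T i j 0 = ((List.range' j (i - j)).map T).prod := by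
  rcases eq_or_lt_of_le hji with h | h
  · subst h
    rw [mm_top T (by omega)]
    simp
  · rw [mm_eq_sum T (by omega)]
    have hcard : (Finset.Icc j (i - 1)).card = i - j := by
      rw [Nat.card_Icc]; omega
    have h0 : i - j - 0 = (Finset.Icc j (i - 1)).card := by omega
    rw [h0, Finset.powersetCard_self, Finset.sum_singleton]
    have h1 : Finset.Icc j (i - 1) = Finset.Icc j (j + (i - 1 - j)) := by
      congr 1; omega
    have h2 : i - j = (i - 1 - j) + 1 := by omega
    rw [h1, sort_Icc, h2]

lemma mm_rec0 {A : Type*} [Ring A] (T : ℕ → A) {i j : ℕ} (hji : j < i) :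
    mm T i j 0 = T j * mm T i (j + 1) 0 := by
  rw [mm_chain T (le_of_lt hji), mm_chain T (by omega)]
  have h2 : i - j = (i - (j + 1)) + 1 := by omega
  rw [h2, List.range'_succ]
  simp

lemma mm_rec {A : Type*} [Ring A] (T : ℕ → A) {i j c : ℕ} (hji : j < i) (hc : 1 ≤ c) :
    mm T i j c = T j * mm T i (j + 1) c + mm T i (j + 1) (c - 1) := by
  rcases lt_trichotomy c (i - j) with h | h | h
  · -- main case: 1 ≤ c < i - j
    have hsplit : Finset.Icc j (i - 1) = insert j (Finset.Icc (j + 1) (i - 1)) := by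
      ext t; simp [Finset.mem_Icc, Finset.mem_insert]; omega
    have hnotmem : j ∉ Finset.Icc (j + 1) (i - 1) := by simp
    have hnn : i - j - c = (i - j - c - 1) + 1 := by omega
    rw [mm_eq_sum T (by omega), hsplit, hnn, Finset.powersetCard_succ_insert hnotmem]
    have hdisj : Disjoint ((Finset.Icc (j + 1) (i - 1)).powersetCard (i - j - c - 1 + 1))
        (((Finset.Icc (j + 1) (i - 1)).powersetCard (i - j - c - 1)).image (insert j)) := by
      rw [Finset.disjoint_left]
      intro s hs hs'
      simp only [Finset.mem_powersetCard] at hs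
      simp only [Finset.mem_image] at hs'
      obtain ⟨t, ht, rfl⟩ := hs'
      exact hnotmem (hs.1 (Finset.mem_insert_self j t))
    rw [Finset.sum_union hdisj]
    have himg : ∑ s ∈ ((Finset.Icc (j + 1) (i - 1)).powersetCard (i - j - c - 1)).image (insert j),
        ((s.sort (· ≤ ·)).map T).prod
        = T j * ∑ s ∈ (Finset.Icc (j + 1) (i - 1)).powersetCard (i - j - c - 1),
            ((s.sort (· ≤ ·)).map T).prod := by
      rw [Finset.sum_image, Finset.mul_sum]
      · apply Finset.sum_congr rfl
        intro s hs
        simp only [Finset.mem_powersetCard] at hs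
        have hjs : j ∉ s := fun hmem => hnotmem (hs.1 hmem)
        have hle : ∀ b ∈ s, j ≤ b := by
          intro b hb
          have := hs.1 hb
          simp [Finset.mem_Icc] at this
          omega
        rw [Finset.sort_insert _ hle hjs]
        simp
      · intro s hs t ht hst
        simp only [Finset.mem_coe, Finset.mem_powersetCard] at hs ht
        have hjs : j ∉ s := fun hmem => hnotmem (hs.1 hmem)
        have hjt : j ∉ t := fun hmem => hnotmem (ht.1 hmem)
        have := congrArg (Finset.erase · j) hst
        simpa [Finset.erase_insert, hjs, hjt] using this
    rw [himg]
    have e1 : mm T i (j + 1) c = ∑ s ∈ (Finset.Icc (j + 1) (i - 1)).powersetCard (i - j - c - 1),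
        ((s.sort (· ≤ ·)).map T).prod := by
      rw [mm_eq_sum T (by omega)]
      congr 2
      omega
    have e2 : mm T i (j + 1) (c - 1) = ∑ s ∈ (Finset.Icc (j + 1) (i - 1)).powersetCard (i - j - c - 1 + 1),
        ((s.sort (· ≤ ·)).map T).prod := by
      rw [mm_eq_sum T (by omega)]
      congr 2
      omega
    rw [e1, e2]
    exact add_comm _ _
  · rw [mm_top T h, mm_high T (by omega), mm_top T (by omega)]
    simp
  · rw [mm_high T h, mm_high T (by omega), mm_high T (by omega)]
    simp

/-- `u` lies in the right ideal generated by `x m, …, x i`. -/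
def EE {A : Type*} [Ring A] (x : ℕ → A) (i m : ℕ) (u : A) : Prop :=
  ∃ g : ℕ → A, u = ∑ l ∈ Finset.Icc m i, x l * g l

namespace EE

variable {A : Type*} [Ring A] {x : ℕ → A} {i m : ℕ}

lemma zero : EE x i m 0 := ⟨0, by simp⟩

lemma add {u v : A} (hu : EE x i m u) (hv : EE x i m v) : EE x i m (u + v) := by
  obtain ⟨g, hg⟩ := hu
  obtain ⟨h, hh⟩ := hv
  exact ⟨g + h, by simp [hg, hh, mul_add, Finset.sum_add_distrib]⟩

lemma rmul {u : A} (hu : EE x i m u) (w : A) : EE x i m (u * w) := by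
  obtain ⟨g, hg⟩ := hu
  exact ⟨fun l => g l * w, by simp [hg, Finset.sum_mul, mul_assoc]⟩

lemma mono {u : A} {m' : ℕ} (hm : m' ≤ m) (hu : EE x i m u) : EE x i m' u := by
  obtain ⟨g, hg⟩ := hu
  refine ⟨fun l => if m ≤ l then g l else 0, ?_⟩
  show u = ∑ l ∈ Finset.Icc m' i, x l * (if m ≤ l then g l else 0)
  have h1 : ∑ l ∈ Finset.Icc m i, x l * (if m ≤ l then g l else 0) =
      ∑ l ∈ Finset.Icc m' i, x l * (if m ≤ l then g l else 0) := by
    refine Finset.sum_subset (Finset.Icc_subset_Icc_left hm) ?_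
    intro l hl hnl
    simp only [Finset.mem_Icc] at hl hnl
    have hlm : ¬ m ≤ l := fun h => hnl ⟨h, hl.2⟩
    rw [if_neg hlm, mul_zero]
  rw [← h1, hg]
  exact Finset.sum_congr rfl fun l hl => by
    simp only [Finset.mem_Icc] at hl
    rw [if_pos hl.1]

lemma single {l : ℕ} (hml : m ≤ l) (hli : l ≤ i) (u : A) : EE x i m (x l * u) := by
  refine ⟨fun t => if t = l then u else 0, ?_⟩
  rw [Finset.sum_congr rfl (fun t _ => by rw [mul_ite, mul_zero]),
    Finset.sum_ite_eq' (Finset.Icc m i) l (fun t => x t * u),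
    if_pos (by simp [Finset.mem_Icc]; omega)]

lemma lmul {u w : A} (hcomm : ∀ l, m ≤ l → l ≤ i → w * x l = x l * w)
    (hu : EE x i m u) : EE x i m (w * u) := by
  obtain ⟨g, hg⟩ := hu
  refine ⟨fun l => w * g l, ?_⟩
  rw [hg, Finset.mul_sum]
  apply Finset.sum_congr rfl
  intro l hl
  simp only [Finset.mem_Icc] at hl
  rw [← mul_assoc, hcomm l hl.1 hl.2, mul_assoc]

end EE

section Main

variable {A : Type*} [Ring A] (T x : ℕ → A) (γA δ : A) (n i : ℕ)

/-- Key inductive lemma: `m_{ij}(c)·x_i ≡ γ·m_{ij}(c+1) + [c=0]·x_j·m_{ij}(0)`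
modulo the right ideal generated by `x_{j+1},…,x_i`. -/
lemma Mlem (hi : 1 ≤ i) (hin : i ≤ n)
    (hKR : ∀ l, 1 ≤ l → l + 1 ≤ n → T l * x (l + 1) = x l * T l + δ * x (l + 1) + γA)
    (hxT : ∀ m l, 1 ≤ m → m ≤ n → 1 ≤ l → l + 1 ≤ n → m ≠ l → m ≠ l + 1 →
      x m * T l = T l * x m)
    (hγ : ∀ u : A, γA * u = u * γA) (hδ : ∀ u : A, δ * u = u * δ) :
    ∀ d j c, j = i - d → 1 ≤ j →
      EE x i (j + 1) (mm T i j c * x i - γA * mm T i j (c + 1) -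
        (if c = 0 then x j * mm T i j 0 else 0)) := by
  intro d
  induction d with
  | zero =>
    intro j c hj hj1
    have hji : j = i := by omega
    subst hji
    rcases Nat.eq_zero_or_pos c with hc | hc
    · subst hc
      have e0 : mm T j j 0 = 1 := mm_top T (by omega)
      have e1 : mm T j j 1 = 0 := mm_high T (by omega)
      have e : mm T j j 0 * x j - γA * mm T j j 1 -
          (if (0:ℕ) = 0 then x j * mm T j j 0 else 0) = 0 := by
        rw [e0, e1, if_pos rfl]
        simp
      rw [e]; exact EE.zero
    · have ea : mm T j j c = 0 := mm_high T (by omega)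
      have eb : mm T j j (c + 1) = 0 := mm_high T (by omega)
      have e : mm T j j c * x j - γA * mm T j j (c + 1) -
          (if c = 0 then x j * mm T j j 0 else 0) = 0 := by
        rw [ea, eb, if_neg (by omega)]
        simp
      rw [e]; exact EE.zero
  | succ d ih =>
    intro j c hj hj1
    have hji : j < i := by omega
    have hj'd : j + 1 = i - d := by omega
    have hTj : ∀ l, j + 1 + 1 ≤ l → l ≤ i → T j * x l = x l * T j := by
      intro l h1 h2
      exact (hxT l j (by omega) (by omega) (by omega) (by omega) (by omega) (by omega)).symm
    have e1 : T j * x (j + 1) = x j * T j + δ * x (j + 1) + γA :=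
      hKR j (by omega) (by omega)
    rcases Nat.eq_zero_or_pos c with hc | hc
    · subst hc
      -- c = 0 case
      have hD := ih (j + 1) 0 hj'd (by omega)
      rw [if_pos rfl] at hD
      have r1 : mm T i j 0 = T j * mm T i (j + 1) 0 := mm_rec0 T hji
      have r2 : mm T i j 1 = T j * mm T i (j + 1) 1 + mm T i (j + 1) 0 := by
        have h := mm_rec T hji (c := 1) (by omega)
        simpa using h
      have eR0 : γA * (T j * mm T i (j + 1) 1) = T j * (γA * mm T i (j + 1) 1) := by
        rw [← mul_assoc, hγ (T j), mul_assoc]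
      have eD : T j * (mm T i (j + 1) 0 * x i - γA * mm T i (j + 1) 1 -
            x (j + 1) * mm T i (j + 1) 0)
          = T j * (mm T i (j + 1) 0 * x i) - T j * (γA * mm T i (j + 1) 1) -
            T j * (x (j + 1) * mm T i (j + 1) 0) := by
        rw [mul_sub, mul_sub]
      have eC : T j * (x (j + 1) * mm T i (j + 1) 0)
          = (x j * T j + x (j + 1) * δ + γA) * mm T i (j + 1) 0 := by
        rw [← mul_assoc, e1, hδ (x (j + 1))]
      have key : mm T i j 0 * x i - γA * mm T i j 1 -
            (if (0:ℕ) = 0 then x j * mm T i j 0 else 0)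
          = T j * (mm T i (j + 1) 0 * x i - γA * mm T i (j + 1) 1 -
              x (j + 1) * mm T i (j + 1) 0) + x (j + 1) * (δ * mm T i (j + 1) 0) := by
        rw [if_pos rfl, r1, r2, mul_add, eR0, eD, eC]
        noncomm_ring
      rw [key]
      exact ((hD.lmul hTj).mono (by omega)).add (EE.single (le_refl _) (by omega) _)
    · -- c ≥ 1 case
      obtain ⟨c', rfl⟩ : ∃ c', c = c' + 1 := ⟨c - 1, by omega⟩
      have hDc := ih (j + 1) (c' + 1) hj'd (by omega)
      rw [if_neg (by omega)] at hDc
      have hDc' := ih (j + 1) c' hj'd (by omega)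
      have r1 : mm T i j (c' + 1) = T j * mm T i (j + 1) (c' + 1) + mm T i (j + 1) c' := by
        have h := mm_rec T hji (c := c' + 1) (by omega)
        simpa using h
      have r2 : mm T i j (c' + 1 + 1)
          = T j * mm T i (j + 1) (c' + 1 + 1) + mm T i (j + 1) (c' + 1) := by
        have h := mm_rec T hji (c := c' + 1 + 1) (by omega)
        simpa using h
      have eR : γA * (T j * mm T i (j + 1) (c' + 1 + 1))
          = T j * (γA * mm T i (j + 1) (c' + 1 + 1)) := by
        rw [← mul_assoc, hγ (T j), mul_assoc]
      have key : mm T i j (c' + 1) * x i - γA * mm T i j (c' + 1 + 1) -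
            (if c' + 1 = 0 then x j * mm T i j 0 else 0)
          = T j * (mm T i (j + 1) (c' + 1) * x i - γA * mm T i (j + 1) (c' + 1 + 1)) +
            (mm T i (j + 1) c' * x i - γA * mm T i (j + 1) (c' + 1) -
              (if c' = 0 then x (j + 1) * mm T i (j + 1) 0 else 0)) +
            (if c' = 0 then x (j + 1) * mm T i (j + 1) 0 else 0) := by
        rw [if_neg (by omega), r1, r2, mul_add, eR]
        noncomm_ring
      rw [key]
      have h1 : EE x i (j + 1)
          (T j * (mm T i (j + 1) (c' + 1) * x i - γA * mm T i (j + 1) (c' + 1 + 1))) := by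
        have hDc2 : EE x i (j + 1 + 1)
            (mm T i (j + 1) (c' + 1) * x i - γA * mm T i (j + 1) (c' + 1 + 1)) := by
          have e : mm T i (j + 1) (c' + 1) * x i - γA * mm T i (j + 1) (c' + 1 + 1)
              = mm T i (j + 1) (c' + 1) * x i - γA * mm T i (j + 1) (c' + 1 + 1) - 0 := by
            rw [sub_zero]
          rw [e]; exact hDc
        exact (hDc2.lmul hTj).mono (by omega)
      refine (h1.add (hDc'.mono (by omega))).add ?_
      rcases Nat.eq_zero_or_pos c' with hc0 | hc0
      · rw [if_pos hc0]
        exact EE.single (le_refl _) (by omega) _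
      · rw [if_neg (by omega)]
        exact EE.zero

/-- Statement (★): `C_j x_i^c ≡ γ^c m_{ij}(c)` modulo the right ideal
generated by `x_j,…,x_i`. -/
lemma Slem (hin : i ≤ n)
    (hKR : ∀ l, 1 ≤ l → l + 1 ≤ n → T l * x (l + 1) = x l * T l + δ * x (l + 1) + γA)
    (hxT : ∀ m l, 1 ≤ m → m ≤ n → 1 ≤ l → l + 1 ≤ n → m ≠ l → m ≠ l + 1 →
      x m * T l = T l * x m)
    (hγ : ∀ u : A, γA * u = u * γA) (hδ : ∀ u : A, δ * u = u * δ)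
    (j : ℕ) (hj1 : 1 ≤ j) (hji : j ≤ i) :
    ∀ c, EE x i j (((List.range' j (i - j)).map T).prod * x i ^ c - γA ^ c * mm T i j c) := by
  intro c
  induction c with
  | zero =>
    have e : ((List.range' j (i - j)).map T).prod * x i ^ 0 - γA ^ 0 * mm T i j 0 = 0 := by
      rw [pow_zero, pow_zero, mm_chain T hji]
      simp
    rw [e]; exact EE.zero
  | succ c ihc =>
    have hM := Mlem T x γA δ n i (by omega) hin hKR hxT hγ hδ (i - j) j c (by omega) hj1
    have hγp : ∀ u : A, γA ^ c * u = u * γA ^ c := fun u =>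
      (Commute.pow_left (hγ u) c)
    have key : ((List.range' j (i - j)).map T).prod * x i ^ (c + 1) -
          γA ^ (c + 1) * mm T i j (c + 1)
        = (((List.range' j (i - j)).map T).prod * x i ^ c - γA ^ c * mm T i j c) * x i +
          γA ^ c * (mm T i j c * x i - γA * mm T i j (c + 1) -
            (if c = 0 then x j * mm T i j 0 else 0)) +
          γA ^ c * (if c = 0 then x j * mm T i j 0 else 0) := by
      rw [pow_succ, pow_succ]
      have : γA ^ c * γA * mm T i j (c + 1) = γA ^ c * (γA * mm T i j (c + 1)) := by
        rw [mul_assoc]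
      rw [this]
      noncomm_ring
    rw [key]
    have hγcomm : ∀ l, j ≤ l → l ≤ i → γA ^ c * x l = x l * γA ^ c := fun l _ _ =>
      hγp (x l)
    refine ((ihc.rmul (x i)).add ((hM.mono (by omega)).lmul hγcomm)).add ?_
    rcases Nat.eq_zero_or_pos c with hc0 | hc0
    · rw [if_pos hc0]
      exact (EE.single (le_refl _) hji _).lmul hγcomm
    · rw [if_neg (by omega)]
      rw [mul_zero]
      exact EE.zero

end Main

/-- In the affine Hecke algebra `H_n(q)` (if `q ≠ 1`) or the
degenerate affine Hecke algebra `H_n(1)` (if `q = 1`) — here axiomatized by its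
generators `T_1,…,T_{n-1}`, `X_1,…,X_n` and relations in an arbitrary `k`-algebra `A` —
let `x_l = X_l - a` and `γ = (q-1)a` (resp. `γ = 1` if `q = 1`).  Then for
`1 ≤ j < i ≤ n` and `c ≥ 0`, the element `T_j T_{j+1} ⋯ T_{i-1} x_i^c - γ^c m_{ij}(c)`
lies in the right ideal `𝔪_i H_n` generated by `x_1,…,x_i`; in particular
`T_j ⋯ T_{i-1} x_i^c ∈ 𝔪_i H_n` whenever `c > i - j`. -/
theorem stmt18 (k : Type*) [Field k] (q a : k) (hq0 : q ≠ 0) (hqa : q ≠ 1 → a ≠ 0)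
    (n : ℕ) (A : Type*) [Ring A] [Algebra k A] (T X : ℕ → A)
    (hquad : ∀ i, 1 ≤ i → i ≤ n - 1 →
      (T i + 1) * (T i - algebraMap k A q) = 0)
    (hbraid : ∀ i, 1 ≤ i → i + 1 ≤ n - 1 →
      T i * T (i + 1) * T i = T (i + 1) * T i * T (i + 1))
    (hTT : ∀ i j, 1 ≤ i → i ≤ n - 1 → 1 ≤ j → j ≤ n - 1 → (i + 1 < j ∨ j + 1 < i) →
      T i * T j = T j * T i)
    (hXX : ∀ i j, 1 ≤ i → i ≤ n → 1 ≤ j → j ≤ n → X i * X j = X j * X i)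
    (hXT : ∀ i j, 1 ≤ i → i ≤ n → 1 ≤ j → j ≤ n - 1 → i ≠ j → i ≠ j + 1 →
      X i * T j = T j * X i)
    (hgen : q ≠ 1 → (∀ i, 1 ≤ i → i ≤ n → IsUnit (X i)) ∧
      (∀ i, 1 ≤ i → i ≤ n - 1 → T i * X i * T i = algebraMap k A q * X (i + 1)))
    (hdeg : q = 1 → ∀ i, 1 ≤ i → i ≤ n - 1 → X (i + 1) * T i = T i * X i + 1)
    (j i c : ℕ) (hj : 1 ≤ j) (hji : j < i) (hin : i ≤ n) :
    (∃ g : ℕ → A,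
      (((List.range' j (i - j)).map T).prod) * (X i - algebraMap k A a) ^ c -
        algebraMap k A ((if q = 1 then 1 else (q - 1) * a) ^ c) * mm T i j c =
      ∑ l ∈ Finset.Icc 1 i, (X l - algebraMap k A a) * g l) ∧
    (i - j < c → ∃ g : ℕ → A,
      (((List.range' j (i - j)).map T).prod) * (X i - algebraMap k A a) ^ c =
      ∑ l ∈ Finset.Icc 1 i, (X l - algebraMap k A a) * g l) := by
  have hcen : ∀ (r : k) (u : A), algebraMap k A r * u = u * algebraMap k A r :=
    fun r u => Algebra.commutes r u
  have hxT' : ∀ m l, 1 ≤ m → m ≤ n → 1 ≤ l → l + 1 ≤ n → m ≠ l → m ≠ l + 1 →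
      (X m - algebraMap k A a) * T l = T l * (X m - algebraMap k A a) := by
    intro m l h1 h2 h3 h4 h5 h6
    rw [sub_mul, mul_sub, hXT m l h1 h2 h3 (by omega) h5 h6, hcen a (T l)]
  have hγ : ∀ u : A, algebraMap k A (if q = 1 then 1 else (q - 1) * a) * u
      = u * algebraMap k A (if q = 1 then 1 else (q - 1) * a) := fun u => hcen _ u
  have hδ : ∀ u : A, (algebraMap k A q - 1) * u = u * (algebraMap k A q - 1) := by
    intro u; rw [sub_mul, mul_sub, hcen q u, mul_one, one_mul]
  have hKR : ∀ l, 1 ≤ l → l + 1 ≤ n →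
      T l * (X (l + 1) - algebraMap k A a) = (X l - algebraMap k A a) * T l +
        (algebraMap k A q - 1) * (X (l + 1) - algebraMap k A a) +
        algebraMap k A (if q = 1 then 1 else (q - 1) * a) := by
    intro l h1 h2
    have hln : l ≤ n - 1 := by omega
    by_cases hq : q = 1
    · have hsqd := hquad l h1 hln
      rw [hq, map_one] at hsqd
      have hsq : T l * T l = 1 := by
        rw [← sub_eq_zero]
        calc T l * T l - 1 = (T l + 1) * (T l - 1) := by noncomm_ring
          _ = 0 := hsqd
      have hd := hdeg hq l h1 hln
      have hTX : T l * X (l + 1) = X l * T l + 1 := by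
        calc T l * X (l + 1) = T l * X (l + 1) * (T l * T l) := by rw [hsq, mul_one]
          _ = T l * (X (l + 1) * T l) * T l := by noncomm_ring
          _ = T l * (T l * X l + 1) * T l := by rw [hd]
          _ = (T l * T l) * (X l * T l) + (T l * T l) := by noncomm_ring
          _ = X l * T l + 1 := by rw [hsq]; noncomm_ring
      rw [if_pos hq, map_one, hq, map_one]
      rw [mul_sub, hTX, sub_mul (X l) (algebraMap k A a) (T l), hcen a (T l)]
      noncomm_ring
    · have hq2 := (hgen hq).2 l h1 hln
      have hquad' := hquad l h1 hln
      have hsq : T l * T l = T l * algebraMap k A q - T l + algebraMap k A q := by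
        rw [← sub_eq_zero]
        calc T l * T l - (T l * algebraMap k A q - T l + algebraMap k A q)
            = (T l + 1) * (T l - algebraMap k A q) := by noncomm_ring
          _ = 0 := hquad'
      have hqinv : algebraMap k A q⁻¹ * algebraMap k A q = 1 := by
        rw [← map_mul, inv_mul_cancel₀ hq0, map_one]
      have hmain : algebraMap k A q * (T l * X (l + 1))
          = algebraMap k A q * (X l * T l + (algebraMap k A q - 1) * X (l + 1)) := by
        calc algebraMap k A q * (T l * X (l + 1))
            = T l * (algebraMap k A q * X (l + 1)) := by
              rw [← mul_assoc, hcen q (T l), mul_assoc]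
          _ = T l * (T l * X l * T l) := by rw [hq2]
          _ = (T l * T l) * (X l * T l) := by noncomm_ring
          _ = (T l * algebraMap k A q - T l + algebraMap k A q) * (X l * T l) := by rw [hsq]
          _ = algebraMap k A q * (T l * X l * T l) - T l * X l * T l +
              algebraMap k A q * (X l * T l) := by
              rw [← hcen q (T l)]; noncomm_ring
          _ = algebraMap k A q * (algebraMap k A q * X (l + 1)) -
              algebraMap k A q * X (l + 1) + algebraMap k A q * (X l * T l) := by rw [hq2]
          _ = algebraMap k A q * (X l * T l + (algebraMap k A q - 1) * X (l + 1)) := by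
              noncomm_ring
      have hTX : T l * X (l + 1) = X l * T l + (algebraMap k A q - 1) * X (l + 1) := by
        calc T l * X (l + 1) = 1 * (T l * X (l + 1)) := (one_mul _).symm
          _ = (algebraMap k A q⁻¹ * algebraMap k A q) * (T l * X (l + 1)) := by rw [hqinv]
          _ = algebraMap k A q⁻¹ * (algebraMap k A q * (T l * X (l + 1))) := by rw [mul_assoc]
          _ = algebraMap k A q⁻¹ * (algebraMap k A q *
                (X l * T l + (algebraMap k A q - 1) * X (l + 1))) := by rw [hmain]
          _ = (algebraMap k A q⁻¹ * algebraMap k A q) *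
                (X l * T l + (algebraMap k A q - 1) * X (l + 1)) := by rw [mul_assoc]
          _ = X l * T l + (algebraMap k A q - 1) * X (l + 1) := by rw [hqinv, one_mul]
      rw [if_neg hq, map_mul, map_sub, map_one]
      rw [mul_sub, hTX, sub_mul (X l) (algebraMap k A a) (T l), hcen a (T l)]
      noncomm_ring
  have hP := Slem T (fun l => X l - algebraMap k A a)
    (algebraMap k A (if q = 1 then 1 else (q - 1) * a)) (algebraMap k A q - 1) n i hin
    hKR hxT' hγ hδ j hj (le_of_lt hji) c
  obtain ⟨g, hg⟩ := hP.mono hj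
  constructor
  · refine ⟨g, ?_⟩
    rw [map_pow]
    exact hg
  · intro hc
    refine ⟨g, ?_⟩
    rw [mm_high T hc, mul_zero, sub_zero] at hg
    exact hg
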